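/- Let d^{0,0}, d^{0,1}, d^{1,0} be endomorphisms of a vector space over F = Z/2Z satisfying d^{0,1}∘d^{0,0} + d^{0,0}∘d^{0,1} = 0 and d^{1,0}∘d^{0,0} + d^{0,0}∘d^{1,0} = 0, and suppose there exists d^{1,1} with d^{1,1}∘d^{0,0} + d^{0,0}∘d^{1,1} + d^{0,1}∘d^{1,0} + d^{1,0}∘d^{0,1} = 0. Then for every n ≥ 1, (d^{1,0}∘d^{0,1})^n is chain homotopic to (d^{1,0})^n ∘ (d^{0,1})^n relative to the differential d^{0,0}; that is, their difference equals d^{0,0}∘H + H∘d^{0,0} for some endomorphism H. -/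
import Mathlib


/-- Given endomorphisms `d00, d01, d10` of an `ℤ/2ℤ`-vector space satisfying the
(anti)commutation relations of equation (15), together with some `d11` realizing the
last relation, for every `n ≥ 1` the maps `(d10 ∘ d01)^n` and `d10^n ∘ d01^n` are
chain homotopic relative to the differential `d00`. -/
theorem pow_comp_chain_homotopic
    (C : Type*) [AddCommGroup C] [Module (ZMod 2) C]
    (d00 d01 d10 : Module.End (ZMod 2) C)
    (h1 : d01 * d00 + d00 * d01 = 0)
    (h2 : d10 * d00 + d00 * d10 = 0)
    (h3 : ∃ d11 : Module.End (ZMod 2) C,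
      d11 * d00 + d00 * d11 + d01 * d10 + d10 * d01 = 0) :
    ∀ n : ℕ, 1 ≤ n → ∃ H : Module.End (ZMod 2) C,
      (d10 * d01) ^ n + d10 ^ n * d01 ^ n = d00 * H + H * d00 := by
  obtain ⟨d11, h11⟩ := h3
  -- characteristic 2
  have two : ∀ X : Module.End (ZMod 2) C, X + X = 0 := by
    intro X
    have : (2 : ZMod 2) • X = 0 := by
      have : (2 : ZMod 2) = 0 := rfl
      rw [this, zero_smul]
    simpa [two_smul] using this
  have eq_of_add : ∀ X Y : Module.End (ZMod 2) C, X + Y = 0 → X = Y := by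
    intro X Y h
    have := congrArg (· + Y) h
    simpa [add_assoc, two Y] using this
  have c1 : Commute d00 d01 := by
    have := eq_of_add _ _ h1
    exact (this).symm
  have c2 : Commute d00 d10 := by
    have := eq_of_add _ _ h2
    exact (this).symm
  -- the homotopy relation
  set homot : Module.End (ZMod 2) C → Module.End (ZMod 2) C → Prop :=
    fun A B => ∃ H : Module.End (ZMod 2) C, A + B = d00 * H + H * d00 with hdef
  have hrefl : ∀ A, homot A A := by
    intro A; exact ⟨0, by simp [two A]⟩
  have htrans : ∀ A B D, homot A B → homot B D → homot A D := by
    rintro A B D ⟨H1, e1⟩ ⟨H2, e2⟩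
    refine ⟨H1 + H2, ?_⟩
    have : (A + B) + (B + D) = (d00 * H1 + H1 * d00) + (d00 * H2 + H2 * d00) := by
      rw [e1, e2]
    have e3 : (A + B) + (B + D) = A + D := by
      rw [show (A + B) + (B + D) = A + (B + B) + D by abel, two B]; abel
    calc A + D = (A + B) + (B + D) := e3.symm
    _ = (d00 * H1 + H1 * d00) + (d00 * H2 + H2 * d00) := this
    _ = d00 * (H1 + H2) + (H1 + H2) * d00 := by noncomm_ring
  have hml : ∀ X A B, Commute d00 X → homot A B → homot (X * A) (X * B) := by
    rintro X A B hc ⟨H, e⟩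
    refine ⟨X * H, ?_⟩
    have : X * (A + B) = X * (d00 * H + H * d00) := by rw [e]
    calc X * A + X * B = X * (A + B) := by rw [mul_add]
    _ = X * (d00 * H + H * d00) := this
    _ = (X * d00) * H + (X * H) * d00 := by noncomm_ring
    _ = d00 * (X * H) + (X * H) * d00 := by rw [← hc.eq, mul_assoc]
  have hmr : ∀ X A B, Commute d00 X → homot A B → homot (A * X) (B * X) := by
    rintro X A B hc ⟨H, e⟩
    refine ⟨H * X, ?_⟩
    have : (A + B) * X = (d00 * H + H * d00) * X := by rw [e]
    calc A * X + B * X = (A + B) * X := by rw [add_mul]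
    _ = (d00 * H + H * d00) * X := this
    _ = d00 * (H * X) + H * (d00 * X) := by noncomm_ring
    _ = d00 * (H * X) + H * (X * d00) := by rw [hc.eq]
    _ = d00 * (H * X) + (H * X) * d00 := by rw [mul_assoc]
  -- the basic swap
  have hswap : homot (d01 * d10) (d10 * d01) := by
    refine ⟨d11, ?_⟩
    have := congrArg (· + (d01 * d10 + d10 * d01)) h11
    simp only [zero_add] at this
    calc d01 * d10 + d10 * d01
        = d11 * d00 + d00 * d11 + d01 * d10 + d10 * d01 + (d01 * d10 + d10 * d01) := by
          rw [h11]; abel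
      _ = d00 * d11 + d11 * d00 + ((d01 * d10 + d01 * d10) + (d10 * d01 + d10 * d01)) := by
          abel
      _ = d00 * d11 + d11 * d00 := by rw [two (d01 * d10), two (d10 * d01)]; abel
  -- moving d01 across powers of d10
  have move : ∀ n : ℕ, homot (d01 * d10 ^ n) (d10 ^ n * d01) := by
    intro n
    induction n with
    | zero => simpa using hrefl d01
    | succ n ih =>
      have s1 : homot (d01 * d10 * d10 ^ n) (d10 * d01 * d10 ^ n) :=
        hmr _ _ _ (c2.pow_right n) hswap
      have s2 : homot (d10 * (d01 * d10 ^ n)) (d10 * (d10 ^ n * d01)) :=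
        hml _ _ _ c2 ih
      have e1 : d01 * d10 ^ (n + 1) = d01 * d10 * d10 ^ n := by
        rw [pow_succ']; noncomm_ring
      have e2 : d10 * d01 * d10 ^ n = d10 * (d01 * d10 ^ n) := by noncomm_ring
      have e3 : d10 * (d10 ^ n * d01) = d10 ^ (n + 1) * d01 := by
        rw [pow_succ']; noncomm_ring
      rw [e1]
      exact htrans _ _ _ s1 (by rw [e2, ← e3] at *; exact s2)
  -- main induction
  have main : ∀ n : ℕ, homot ((d10 * d01) ^ n) (d10 ^ n * d01 ^ n) := by
    intro n
    induction n with
    | zero => simpa using hrefl 1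
    | succ n ih =>
      have s1 : homot ((d10 * d01) * (d10 * d01) ^ n) ((d10 * d01) * (d10 ^ n * d01 ^ n)) :=
        hml _ _ _ (c2.mul_right c1) ih
      have s2 : homot (d10 * (d01 * d10 ^ n) * d01 ^ n) (d10 * (d10 ^ n * d01) * d01 ^ n) :=
        hmr _ _ _ (c1.pow_right n) (hml _ _ _ c2 (move n))
      have e1 : (d10 * d01) ^ (n + 1) = (d10 * d01) * (d10 * d01) ^ n := by
        rw [pow_succ']
      have e2 : (d10 * d01) * (d10 ^ n * d01 ^ n) = d10 * (d01 * d10 ^ n) * d01 ^ n := by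
        noncomm_ring
      have e3 : d10 * (d10 ^ n * d01) * d01 ^ n = d10 ^ (n + 1) * d01 ^ (n + 1) := by
        rw [pow_succ', pow_succ']; noncomm_ring
      rw [e1]
      refine htrans _ _ _ s1 ?_
      rw [e2, ← e3]
      exact s2
  intro n _
  exact main n
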